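/- The retrieve function commutes with the effect operation for the set-spot action: for every concrete state (σ, ζ, ξ) ∈ DLR and spots s, t, retrieve(effect_{set:s:t}(σ, ζ, ξ)) = effect_{set:s:t}(retrieve(σ, ζ, ξ)), where on concrete states effect_{set:s:t}(σ,ζ,ξ) = (σ ⊕ {s ↦ σ(t)}, ζ, ξ) and on deterministic data linkages effect_{set:s:t} replaces the (unique, if any) spot link at s by a spot link s=a when t has content a, and removes the spot link at s when t has no content. -/

import Mathlib

open scoped Classical

inductive Atomic (S F A V : Type) : Type where
  | sLink : S → A → Atomic S F A V
  | pfLink : A → F → Atomic S F A V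
  | fLink : A → F → A → Atomic S F A V
  | vAss : A → V → Atomic S F A V
  deriving DecidableEq, Fintype

structure CState (S F A V : Type) where
  sigma : S → Option A
  zeta : A → Option (F → Option (Option A))
  xi : A → Option (Option V)

variable {S F A V : Type}

/-- Well-formedness: membership in DLR. -/
def InDLR (c : CState S F A V) : Prop :=
  (∀ a, (c.zeta a).isSome ↔ (c.xi a).isSome) ∧
  (∀ s a, c.sigma s = some a → (c.zeta a).isSome) ∧
  (∀ a g f b, c.zeta a = some g → g f = some (some b) → (c.zeta b).isSome)

noncomputable def retrieve [Fintype S] [Fintype F] [Fintype A] [Fintype V]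
    [DecidableEq S] [DecidableEq F] [DecidableEq A] [DecidableEq V]
    (c : CState S F A V) : Finset (Atomic S F A V) :=
  Finset.univ.filter (fun x => match x with
    | .sLink s a => c.sigma s = some a
    | .pfLink a f => (c.zeta a).map (fun g => g f) = some (some none)
    | .fLink a f b => (c.zeta a).map (fun g => g f) = some (some (some b))
    | .vAss a n => c.xi a = some (some n))

def Deterministic (L : Finset (Atomic S F A V)) : Prop :=
  (∀ s a b, Atomic.sLink s a ∈ L → Atomic.sLink s b ∈ L → a = b) ∧
  (∀ a f b c, Atomic.fLink a f b ∈ L → Atomic.fLink a f c ∈ L → b = c) ∧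
  (∀ a f b, Atomic.fLink a f b ∈ L → Atomic.pfLink a f ∉ L) ∧
  (∀ a n m, Atomic.vAss a n ∈ L → Atomic.vAss a m ∈ L → n = m)

/-- The atomic objects that are spot-linked to spot `s` in `L`. -/
noncomputable def spotCands [Fintype A] (L : Finset (Atomic S F A V)) (s : S) :
    Finset A :=
  Finset.univ.filter (fun a => Atomic.sLink s a ∈ L)

/-- The effect of the set-spot action `set:s:t` on a (deterministic) data
linkage: replace the spot link at `s` (if any) by a spot link `s = a` when `t`
has content `a`, and just remove the spot link at `s` when `t` has no
content. -/
noncomputable def dlSetSpot [Fintype A] [DecidableEq S] [DecidableEq F]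
    [DecidableEq A] [DecidableEq V]
    (L : Finset (Atomic S F A V)) (s t : S) : Finset (Atomic S F A V) :=
  (L.filter (fun x => ∀ b : A, x ≠ Atomic.sLink s b)) ∪
    (spotCands L t).image (fun a => Atomic.sLink s a)

/-- The effect of the set-spot action `set:s:t` on concrete states. -/
noncomputable def csSetSpot [DecidableEq S] (s t : S) (c : CState S F A V) :
    CState S F A V :=
  ⟨Function.update c.sigma s (c.sigma t), c.zeta, c.xi⟩

section SetSpot

variable [Fintype A] [DecidableEq S] [DecidableEq F] [DecidableEq A] [DecidableEq V]

theorem mem_dlSetSpot_sLink_self {L : Finset (Atomic S F A V)} {s t : S} {a : A} :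
    Atomic.sLink s a ∈ dlSetSpot L s t ↔ Atomic.sLink t a ∈ L := by
  simp [dlSetSpot, spotCands]

theorem mem_dlSetSpot_of_forall_ne {L : Finset (Atomic S F A V)} {s t : S}
    {x : Atomic S F A V} (hx : ∀ b, x ≠ Atomic.sLink s b) :
    x ∈ dlSetSpot L s t ↔ x ∈ L := by
  simp [dlSetSpot, hx, fun a => (hx a).symm]

variable [Fintype S] [Fintype F] [Fintype V]

theorem mem_retrieve_sLink {c : CState S F A V} {s : S} {a : A} :
    Atomic.sLink s a ∈ retrieve c ↔ c.sigma s = some a := by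
  simp [retrieve]

theorem mem_retrieve_csSetSpot_sLink_self {c : CState S F A V} {s t : S} {a : A} :
    Atomic.sLink s a ∈ retrieve (csSetSpot s t c) ↔ c.sigma t = some a := by
  simp [mem_retrieve_sLink, csSetSpot]

theorem mem_retrieve_csSetSpot_of_forall_ne {c : CState S F A V} {s t : S}
    {x : Atomic S F A V} (hx : ∀ b, x ≠ Atomic.sLink s b) :
    x ∈ retrieve (csSetSpot s t c) ↔ x ∈ retrieve c := by
  cases x with
  | sLink s' a =>
    have hs' : s' ≠ s := fun h => hx a (h ▸ rfl)
    simp [mem_retrieve_sLink, csSetSpot, Function.update_of_ne hs']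
  | _ => simp [retrieve, csSetSpot]

end SetSpot

theorem retrieve_setSpot_general [Fintype S] [Fintype F] [Fintype A] [Fintype V]
    [DecidableEq S] [DecidableEq F] [DecidableEq A] [DecidableEq V]
    (c : CState S F A V) (s t : S) :
    retrieve (csSetSpot s t c) = dlSetSpot (retrieve c) s t := by
  ext x
  by_cases hx : ∃ a, x = Atomic.sLink s a
  · obtain ⟨a, rfl⟩ := hx
    rw [mem_retrieve_csSetSpot_sLink_self, mem_dlSetSpot_sLink_self, mem_retrieve_sLink]
  · push Not at hx
    rw [mem_retrieve_csSetSpot_of_forall_ne hx, mem_dlSetSpot_of_forall_ne hx]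

/-- the retrieve function commutes with the effect operation of
the set-spot action. -/
theorem retrieve_setSpot [Fintype S] [Fintype F] [Fintype A] [Fintype V]
    [DecidableEq S] [DecidableEq F] [DecidableEq A] [DecidableEq V]
    (c : CState S F A V) (hc : InDLR c) (s t : S) :
    retrieve (csSetSpot s t c) = dlSetSpot (retrieve c) s t :=
  retrieve_setSpot_general c s t
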